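/- arXiv:2308.13951 — 7 statements merged into one kernel-verified Lean document; each statement's English description precedes it below -/
import Mathlib

section
/- Let X be a Banach space, Y a closed subspace of X, I a closed subspace of Y, and S : X → X a norm-one projection of X onto Y. Then the linear map from X/S⁻¹(I) to Y/I induced by S is an isometry. -/
/-- Let `X` be a Banach space, `Y` a closed subspace, `I` a closed
subspace of `Y`, and `S : X → X` a norm-one projection of `X` onto `Y`.  Then the map
`X ⧸ S⁻¹(I) → Y ⧸ I` induced by `S` is an isometry. -/
theorem stmt0 {X : Type*} [NormedAddCommGroup X] [NormedSpace ℂ X] [CompleteSpace X]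
    (Y I : Submodule ℂ X) (hY : IsClosed (Y : Set X)) (hI : IsClosed (I : Set X))
    (hIY : I ≤ Y) (S : X →L[ℂ] X)
    (hidem : ∀ x, S (S x) = S x)
    (hrange : LinearMap.range (S : X →ₗ[ℂ] X) = Y)
    (hnorm : ‖S‖ = 1) :
    ∀ x : X,
      ‖(Submodule.Quotient.mk
          (⟨S x, hrange ▸ LinearMap.mem_range_self (S : X →ₗ[ℂ] X) x⟩ : Y) :
        Y ⧸ I.comap Y.subtype)‖
        = ‖(Submodule.Quotient.mk x : X ⧸ I.comap (S : X →ₗ[ℂ] X))‖ := by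
  intro x
  -- `S` fixes every element of `Y`.
  have hfix : ∀ y ∈ Y, S y = y := by
    intro y hy
    rw [← hrange] at hy
    obtain ⟨z, rfl⟩ := hy
    exact hidem z
  have hSle : ∀ m : X, ‖S m‖ ≤ ‖m‖ := by
    intro m
    calc ‖S m‖ ≤ ‖S‖ * ‖m‖ := S.le_opNorm m
    _ = ‖m‖ := by rw [hnorm, one_mul]
  refine le_antisymm ?_ ?_
  · refine le_of_forall_pos_le_add fun ε hε => ?_
    obtain ⟨m, hm, hmn⟩ :=
      Submodule.Quotient.norm_mk_lt
        (Submodule.Quotient.mk x : X ⧸ I.comap (S : X →ₗ[ℂ] X)) hε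
    -- `S (x - m) ∈ I`
    have hxm : S (x - m) ∈ I := by
      have := (Submodule.Quotient.eq _).mp hm.symm
      simpa using this
    have hq :
        (Submodule.Quotient.mk
            (⟨S x, hrange ▸ LinearMap.mem_range_self (S : X →ₗ[ℂ] X) x⟩ : Y) :
          Y ⧸ I.comap Y.subtype)
          = Submodule.Quotient.mk
              (⟨S m, hrange ▸ LinearMap.mem_range_self (S : X →ₗ[ℂ] X) m⟩ : Y) := by
      rw [Submodule.Quotient.eq]
      simp only [Submodule.mem_comap, Submodule.subtype_apply]
      simpa [map_sub] using hxm
    calc ‖(Submodule.Quotient.mk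
            (⟨S x, hrange ▸ LinearMap.mem_range_self (S : X →ₗ[ℂ] X) x⟩ : Y) :
          Y ⧸ I.comap Y.subtype)‖
        = ‖(Submodule.Quotient.mk
            (⟨S m, hrange ▸ LinearMap.mem_range_self (S : X →ₗ[ℂ] X) m⟩ : Y) :
          Y ⧸ I.comap Y.subtype)‖ := by rw [hq]
      _ ≤ ‖(⟨S m, hrange ▸ LinearMap.mem_range_self (S : X →ₗ[ℂ] X) m⟩ : Y)‖ :=
          Submodule.Quotient.norm_mk_le _ _
      _ = ‖S m‖ := rfl
      _ ≤ ‖m‖ := hSle m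
      _ ≤ ‖(Submodule.Quotient.mk x : X ⧸ I.comap (S : X →ₗ[ℂ] X))‖ + ε := hmn.le
  · refine le_of_forall_pos_le_add fun ε hε => ?_
    obtain ⟨n, hn, hnn⟩ :=
      Submodule.Quotient.norm_mk_lt
        (Submodule.Quotient.mk
            (⟨S x, hrange ▸ LinearMap.mem_range_self (S : X →ₗ[ℂ] X) x⟩ : Y) :
          Y ⧸ I.comap Y.subtype) hε
    -- `S x - n ∈ I`
    have hxn : S x - (n : X) ∈ I := by
      have := (Submodule.Quotient.eq _).mp hn.symm
      simpa using this
    have hq : (Submodule.Quotient.mk x : X ⧸ I.comap (S : X →ₗ[ℂ] X))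
        = Submodule.Quotient.mk (n : X) := by
      rw [Submodule.Quotient.eq]
      simp only [Submodule.mem_comap]
      have : S (x - (n : X)) = S x - (n : X) := by
        rw [map_sub, hfix (n : X) n.2]
      rw [ContinuousLinearMap.coe_coe, this]
      exact hxn
    calc ‖(Submodule.Quotient.mk x : X ⧸ I.comap (S : X →ₗ[ℂ] X))‖
        = ‖(Submodule.Quotient.mk (n : X) : X ⧸ I.comap (S : X →ₗ[ℂ] X))‖ := by rw [hq]
      _ ≤ ‖(n : X)‖ := Submodule.Quotient.norm_mk_le _ _
      _ = ‖n‖ := rfl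
      _ ≤ _ := hnn.le
end

section
/- Let A be a normal uniform algebra on a compact Hausdorff space X (i.e., A is a closed point-separating unital subalgebra of C(X) such that for any two disjoint closed sets K₀, K₁ ⊆ X there exists f ∈ A with f = 0 on K₀ and f = 1 on K₁), and let x₀ ∈ X. If there exists a closed neighborhood N of x₀ such that the uniform closure of {f|N : f ∈ A} in C(N) is strongly regular at x₀, then A is strongly regular at x₀. -/
/-- The ideal `J_x` of functions in `A` vanishing on a neighborhood of `x`. -/
def IdealJ {X : Type*} [TopologicalSpace X] (A : Set C(X, ℂ)) (x : X) : Set C(X, ℂ) :=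
  {f ∈ A | ∃ U ∈ nhds x, ∀ y ∈ U, f y = 0}

/-- `A` is strongly regular at `x`: the closure of `J_x` equals `M_x`. -/
def StronglyRegularAt {X : Type*} [TopologicalSpace X] (A : Set C(X, ℂ)) (x : X) : Prop :=
  closure (IdealJ A x) = {f ∈ A | f x = 0}

/-- Let `A` be a normal uniform algebra on a compact Hausdorff space `X` and
`x₀ ∈ X`.  If there is a closed neighborhood `N` of `x₀` such that the uniform closure of
`A|N` in `C(N)` is strongly regular at `x₀`, then `A` is strongly regular at `x₀`. -/
theorem stmt5 {X : Type*} [TopologicalSpace X] [CompactSpace X] [T2Space X]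
    (A : Subalgebra ℂ C(X, ℂ)) (hclosed : IsClosed (A : Set C(X, ℂ)))
    (hsep : ∀ x y : X, x ≠ y → ∃ f ∈ A, f x ≠ f y)
    (hnormal : ∀ K₀ K₁ : Set X, IsClosed K₀ → IsClosed K₁ → Disjoint K₀ K₁ →
      ∃ f ∈ A, (∀ y ∈ K₀, f y = 0) ∧ (∀ y ∈ K₁, f y = 1))
    (x₀ : X) (N : Set X) (hN : N ∈ nhds x₀) (hNclosed : IsClosed N)
    (hsr : StronglyRegularAt
      (closure ((fun f : C(X, ℂ) => f.restrict N) '' (A : Set C(X, ℂ))))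
      (⟨x₀, mem_of_mem_nhds hN⟩ : N)) :
    StronglyRegularAt (A : Set C(X, ℂ)) x₀ := by
  haveI : CompactSpace N := isCompact_iff_compactSpace.mp hNclosed.isCompact
  apply Set.Subset.antisymm
  · -- easy inclusion: closure J ⊆ M
    intro f hf
    refine ⟨closure_minimal (fun g hg => hg.1) hclosed hf, ?_⟩
    have hcl : IsClosed {g : C(X, ℂ) | g x₀ = 0} :=
      isClosed_eq (continuous_eval_const x₀) continuous_const
    have : f ∈ closure {g : C(X, ℂ) | g x₀ = 0} := by
      refine closure_mono ?_ hf
      rintro g ⟨-, U, hU, hgU⟩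
      exact hgU x₀ (mem_of_mem_nhds hU)
    exact hcl.closure_subset this
  · rintro f ⟨hfA, hfx⟩
    -- fixed data: closed neighborhood D ⊆ interior N, and e' ∈ A with e' = 0 on D,
    -- e' = 1 outside interior N
    have hintN : interior N ∈ nhds x₀ := interior_mem_nhds.mpr hN
    obtain ⟨D, hD, hDclosed, hDsub⟩ := exists_mem_nhds_isClosed_subset hintN
    obtain ⟨e', he'A, he'0, he'1⟩ := hnormal D (interior N)ᶜ hDclosed
      isOpen_interior.isClosed_compl
      (Set.disjoint_left.mpr fun y hy hy' => hy' (hDsub hy))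
    -- f|N belongs to the closure of J_B
    set x₀' : N := (⟨x₀, mem_of_mem_nhds hN⟩ : N) with hx₀'
    have hfB : f.restrict N ∈
        closure (IdealJ (closure ((fun f : C(X, ℂ) => f.restrict N) '' (A : Set C(X, ℂ)))) x₀') := by
      rw [hsr]
      exact ⟨subset_closure ⟨f, hfA, rfl⟩, hfx⟩
    rw [Metric.mem_closure_iff]
    intro ε hε
    have hden : (0 : ℝ) < 1 + ‖e'‖ := by positivity
    set δ : ℝ := ε / (4 * (1 + ‖e'‖)) with hδdef
    have hδ : 0 < δ := by positivity
    obtain ⟨g, hgJ, hgdist⟩ := Metric.mem_closure_iff.mp hfB δ hδ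
    obtain ⟨hgB, U, hU, hgU⟩ := hgJ
    -- open set O ⊆ interior N around x₀ whose intersection with N is inside U
    obtain ⟨t, ht, htU⟩ := (mem_nhds_subtype N x₀' U).mp hU
    have hO : interior t ∩ interior N ∈ nhds x₀ :=
      Filter.inter_mem (interior_mem_nhds.mpr ht) hintN
    obtain ⟨C, hC, hCclosed, hCsub⟩ := exists_mem_nhds_isClosed_subset hO
    obtain ⟨e, heA, he0, he1⟩ := hnormal C (interior t ∩ interior N)ᶜ hCclosed
      (isOpen_interior.inter isOpen_interior).isClosed_compl
      (Set.disjoint_left.mpr fun y hy hy' => hy' (hCsub hy))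
    -- h ∈ A with h|N very close to g
    have hden2 : (0 : ℝ) < ‖e‖ + 1 := by positivity
    obtain ⟨h', hh'mem, hh'dist⟩ := Metric.mem_closure_iff.mp hgB (δ / (‖e‖ + 1))
      (by positivity)
    obtain ⟨h, hhA, rfl⟩ := hh'mem
    -- the approximating element of J
    refine ⟨e' * f + (1 - e') * e * h, ⟨?_, D ∩ C, Filter.inter_mem hD hC, ?_⟩, ?_⟩
    · exact A.add_mem (A.mul_mem he'A hfA)
        (A.mul_mem (A.mul_mem (A.sub_mem A.one_mem he'A) heA) hhA)
    · rintro y ⟨hyD, hyC⟩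
      simp [he'0 y hyD, he0 y hyC]
    · -- distance estimate
      have key : ∀ y : X, ‖f y - (e' y * f y + (1 - e' y) * e y * h y)‖ ≤ (1 + ‖e'‖) * (2 * δ) := by
        intro y
        have hfactor : f y - (e' y * f y + (1 - e' y) * e y * h y)
            = (1 - e' y) * (f y - e y * h y) := by ring
        rw [hfactor]
        by_cases hyN : y ∈ interior N
        · have hyN' : y ∈ N := interior_subset hyN
          have h1 : ‖(1 : ℂ) - e' y‖ ≤ 1 + ‖e'‖ := by
            calc ‖(1 : ℂ) - e' y‖ ≤ ‖(1 : ℂ)‖ + ‖e' y‖ := norm_sub_le _ _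
            _ ≤ 1 + ‖e'‖ := by
                have := e'.norm_coe_le_norm y
                simp only [norm_one]
                linarith
          have hfg : ‖f y - g ⟨y, hyN'⟩‖ ≤ δ := by
            have := (f.restrict N - g).norm_coe_le_norm ⟨y, hyN'⟩
            have h2 : ‖f.restrict N - g‖ ≤ δ := by
              rw [← dist_eq_norm]; exact le_of_lt hgdist
            calc ‖f y - g ⟨y, hyN'⟩‖ = ‖(f.restrict N - g) ⟨y, hyN'⟩‖ := rfl
            _ ≤ ‖f.restrict N - g‖ := this
            _ ≤ δ := h2
          have hhg : ‖h y - g ⟨y, hyN'⟩‖ ≤ δ / (‖e‖ + 1) := by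
            have := (h.restrict N - g).norm_coe_le_norm ⟨y, hyN'⟩
            have h2 : ‖h.restrict N - g‖ ≤ δ / (‖e‖ + 1) := by
              rw [← dist_eq_norm, dist_comm]; exact le_of_lt hh'dist
            calc ‖h y - g ⟨y, hyN'⟩‖ = ‖(h.restrict N - g) ⟨y, hyN'⟩‖ := rfl
            _ ≤ ‖h.restrict N - g‖ := this
            _ ≤ δ / (‖e‖ + 1) := h2
          have h2 : ‖f y - e y * h y‖ ≤ 2 * δ := by
            by_cases hyO : y ∈ interior t ∩ interior N
            · -- here g vanishes
              have hg0 : g ⟨y, hyN'⟩ = 0 := by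
                apply hgU
                exact htU (show y ∈ t from interior_subset hyO.1)
              rw [hg0, sub_zero] at hfg hhg
              have heh : ‖e y * h y‖ ≤ δ := by
                rw [norm_mul]
                calc ‖e y‖ * ‖h y‖ ≤ ‖e‖ * (δ / (‖e‖ + 1)) := by
                      apply mul_le_mul (e.norm_coe_le_norm y) hhg (norm_nonneg _) (norm_nonneg _)
                _ ≤ (‖e‖ + 1) * (δ / (‖e‖ + 1)) := by
                      apply mul_le_mul_of_nonneg_right (by linarith) (by positivity)
                _ = δ := by field_simp
              calc ‖f y - e y * h y‖ ≤ ‖f y‖ + ‖e y * h y‖ := norm_sub_le _ _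
              _ ≤ δ + δ := add_le_add hfg heh
              _ = 2 * δ := by ring
            · -- here e y = 1
              rw [he1 y hyO, one_mul]
              have hδ2 : δ / (‖e‖ + 1) ≤ δ := by
                rw [div_le_iff₀ hden2]
                nlinarith [hδ.le, norm_nonneg e]
              calc ‖f y - h y‖ = ‖(f y - g ⟨y, hyN'⟩) + (g ⟨y, hyN'⟩ - h y)‖ := by congr 1; ring
              _ ≤ ‖f y - g ⟨y, hyN'⟩‖ + ‖g ⟨y, hyN'⟩ - h y‖ := norm_add_le _ _
              _ = ‖f y - g ⟨y, hyN'⟩‖ + ‖h y - g ⟨y, hyN'⟩‖ := by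
                    congr 1
                    exact norm_sub_rev _ _
              _ ≤ δ + δ / (‖e‖ + 1) := add_le_add hfg hhg
              _ ≤ 2 * δ := by linarith
          calc ‖(1 - e' y) * (f y - e y * h y)‖ = ‖(1 : ℂ) - e' y‖ * ‖f y - e y * h y‖ :=
                norm_mul _ _
          _ ≤ (1 + ‖e'‖) * (2 * δ) := mul_le_mul h1 h2 (norm_nonneg _) (le_of_lt hden)
        · rw [he'1 y hyN]
          simp [hδ.le, hden.le]
          positivity
      rw [dist_eq_norm]
      have : ‖f - (e' * f + (1 - e') * e * h)‖ ≤ (1 + ‖e'‖) * (2 * δ) := by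
        apply (ContinuousMap.norm_le _ (by positivity)).mpr
        intro y
        simpa using key y
      have hεbound : (1 + ‖e'‖) * (2 * δ) = ε / 2 := by
        rw [hδdef]; field_simp; ring
      rw [hεbound] at this
      linarith
end

section
/- Let A be a uniform algebra on a compact Hausdorff space X and x ∈ X. Suppose that for each compact subset E of X \ {x} there exist a neighborhood U of x and f ∈ A with f = 1 on U, f = 0 on E, and such that for every k ∈ ℕ there exists g ∈ A with g^(2^k) = f. Then A has bounded relative units at x: there is a constant C ≥ 1 such that for each compact K ⊆ X \ {x} there exists h ∈ A vanishing on a neighborhood of x with h = 1 on K and ‖h‖_X ≤ C. -/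
/-!
Given `K`, take the function `f` of the hypothesis and a `2 ^ k`-th root `g` of it, with `k` so
large that `‖f‖ ≤ 2 ^ 2 ^ k`; then `‖g‖ ≤ 2`. Near `x`, `g` takes values in the finite set of
`2 ^ k`-th roots of unity, so by continuity it is constant there, equal to `ζ = g x`. Hence
`1 - ζ⁻¹ • g` vanishes near `x`, equals `1` on `K` (where `g = 0`), and has norm `≤ 1 + ‖g‖ ≤ 3`.
-/

open Filter Topology

theorem ContinuousAt.eventually_eq_of_eventually_mem_finite {X Y : Type*} [TopologicalSpace X]
    [TopologicalSpace Y] [T1Space Y] {g : X → Y} {x : X} {S : Set Y} (hg : ContinuousAt g x)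
    (hS : S.Finite) (hgS : ∀ᶠ y in 𝓝 x, g y ∈ S) : ∀ᶠ y in 𝓝 x, g y = g x := by
  have hoff : ∀ᶠ y in 𝓝 x, g y ∈ (S \ {g x})ᶜ := hg.preimage_mem_nhds <|
    (hS.subset Set.sdiff_subset).isClosed.isOpen_compl.mem_nhds fun h => h.2 rfl
  filter_upwards [hgS, hoff] with y hyS hyoff
  by_contra hne
  exact hyoff ⟨hyS, hne⟩

section

variable {X : Type*} [TopologicalSpace X] [CompactSpace X]

theorem ContinuousMap.norm_le_of_pow_eq {𝕜 : Type*} [NormedDivisionRing 𝕜] {f g : C(X, 𝕜)}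
    {n : ℕ} (hn : n ≠ 0) {r : ℝ} (hr : 0 ≤ r) (hgf : g ^ n = f) (hf : ‖f‖ ≤ r ^ n) :
    ‖g‖ ≤ r := by
  refine (ContinuousMap.norm_le g hr).2 fun y => ?_
  refine le_of_pow_le_pow_left₀ hn hr ?_
  calc ‖g y‖ ^ n = ‖f y‖ := by rw [← norm_pow, ← hgf, ContinuousMap.pow_apply]
    _ ≤ ‖f‖ := f.norm_coe_le_norm y
    _ ≤ r ^ n := hf

theorem exists_relative_unit_of_pow_eq {A : Subalgebra ℂ C(X, ℂ)} {x : X} {K U : Set X}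
    {f g : C(X, ℂ)} {n : ℕ} (hn : n ≠ 0) (hU : U ∈ 𝓝 x) (hfU : ∀ y ∈ U, f y = 1)
    (hfK : ∀ y ∈ K, f y = 0) (hgA : g ∈ A) (hgf : g ^ n = f) :
    ∃ h ∈ A, (∃ V ∈ 𝓝 x, ∀ y ∈ V, h y = 0) ∧ (∀ y ∈ K, h y = 1) ∧ ‖h‖ ≤ 1 + ‖g‖ := by
  have hgpow : ∀ y, g y ^ n = f y := fun y => by rw [← hgf, ContinuousMap.pow_apply]
  have hgx : g x ^ n = 1 := by rw [hgpow, hfU x (mem_of_mem_nhds hU)]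
  have hgx_norm : ‖g x‖ = 1 := Complex.norm_eq_one_of_pow_eq_one hgx hn
  have hgx_ne : g x ≠ 0 := norm_ne_zero_iff.1 (by rw [hgx_norm]; exact one_ne_zero)
  have hg_const : ∀ᶠ y in 𝓝 x, g y = g x := by
    refine g.continuous.continuousAt.eventually_eq_of_eventually_mem_finite
      (Polynomial.nthRootsFinset n (1 : ℂ)).finite_toSet ?_
    filter_upwards [hU] with y hy
    rw [Finset.mem_coe, Polynomial.mem_nthRootsFinset (Nat.pos_of_ne_zero hn), hgpow, hfU y hy]
  have : Nonempty X := ⟨x⟩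
  refine ⟨1 - (g x)⁻¹ • g, A.sub_mem A.one_mem (A.smul_mem hgA _), ⟨_, hg_const, ?_⟩, ?_, ?_⟩
  · intro y (hy : g y = g x)
    simp [hy, inv_mul_cancel₀ hgx_ne]
  · intro y hy
    have hgy : g y = 0 := pow_eq_zero_iff hn |>.1 (by rw [hgpow, hfK y hy])
    simp [hgy]
  · calc ‖1 - (g x)⁻¹ • g‖ ≤ ‖(1 : C(X, ℂ))‖ + ‖(g x)⁻¹ • g‖ := norm_sub_le _ _
      _ = 1 + ‖g‖ := by rw [norm_one, norm_smul, norm_inv, hgx_norm, inv_one, one_mul]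

end

theorem stmt6_general {X : Type*} [TopologicalSpace X] [CompactSpace X]
    (A : Subalgebra ℂ C(X, ℂ))
    (x : X)
    (hyp : ∀ E : Set X, IsCompact E → E ⊆ {x}ᶜ →
      ∃ U ∈ nhds x, ∃ f ∈ A, (∀ y ∈ U, f y = 1) ∧ (∀ y ∈ E, f y = 0) ∧
        ∀ k : ℕ, ∃ g ∈ A, g ^ (2 ^ k) = f) :
    ∃ C : ℝ, 1 ≤ C ∧ ∀ K : Set X, IsCompact K → K ⊆ {x}ᶜ →
      ∃ h ∈ A, (∃ U ∈ nhds x, ∀ y ∈ U, h y = 0) ∧ (∀ y ∈ K, h y = 1) ∧ ‖h‖ ≤ C := by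
  refine ⟨3, by norm_num, fun K hK hKx => ?_⟩
  obtain ⟨U, hU, f, -, hfU, hfK, hroots⟩ := hyp K hK hKx
  obtain ⟨k, hk⟩ : ∃ k : ℕ, ‖f‖ ≤ 2 ^ 2 ^ k := by
    obtain ⟨k, hk⟩ := pow_unbounded_of_one_lt ‖f‖ (one_lt_two (α := ℝ))
    exact ⟨k, hk.le.trans (pow_le_pow_right₀ one_le_two Nat.lt_two_pow_self.le)⟩
  obtain ⟨g, hgA, hgf⟩ := hroots k
  have hg : ‖g‖ ≤ 2 :=
    ContinuousMap.norm_le_of_pow_eq (pow_ne_zero k two_ne_zero) zero_le_two hgf hk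
  obtain ⟨h, hA, hvanish, hK1, hnorm⟩ :=
    exists_relative_unit_of_pow_eq (pow_ne_zero k two_ne_zero) hU hfU hfK hgA hgf
  exact ⟨h, hA, hvanish, hK1, by linarith⟩

/-- Feinstein–Heath. Let `A` be a uniform algebra on a compact Hausdorff
space `X` and `x ∈ X`.  Suppose that for each compact `E ⊆ X \ {x}` there are a neighborhood
`U` of `x` and `f ∈ A` with `f = 1` on `U`, `f = 0` on `E`, and `f` having `2^k`-th roots in
`A` for all `k`.  Then `A` has bounded relative units at `x`. -/
theorem stmt6 {X : Type*} [TopologicalSpace X] [CompactSpace X] [T2Space X]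
    (A : Subalgebra ℂ C(X, ℂ)) (hclosed : IsClosed (A : Set C(X, ℂ)))
    (hsep : ∀ x y : X, x ≠ y → ∃ f ∈ A, f x ≠ f y)
    (x : X)
    (hyp : ∀ E : Set X, IsCompact E → E ⊆ {x}ᶜ →
      ∃ U ∈ nhds x, ∃ f ∈ A, (∀ y ∈ U, f y = 1) ∧ (∀ y ∈ E, f y = 0) ∧
        ∀ k : ℕ, ∃ g ∈ A, g ^ (2 ^ k) = f) :
    ∃ C : ℝ, 1 ≤ C ∧ ∀ K : Set X, IsCompact K → K ⊆ {x}ᶜ →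
      ∃ h ∈ A, (∃ U ∈ nhds x, ∀ y ∈ U, h y = 0) ∧ (∀ y ∈ K, h y = 1) ∧ ‖h‖ ≤ C :=
  stmt6_general A x hyp
end

section
/- Let A be a uniform algebra on a compact Hausdorff space X and x ∈ X. If A has bounded relative units at x, then x is a generalized peak point for A: for every neighborhood U of x there exists f ∈ A with f(x) = ‖f‖_X = 1 and |f(y)| < 1 for all y ∈ X \ U. -/
/-!
Starting from `U`, bounded relative units produce a shrinking chain of neighbourhoods
`U = W₀ ⊇ W₁ ⊇ ⋯` of `x` and functions `fₙ ∈ A` with `‖fₙ‖ ≤ C`, `fₙ = 0` on `Wₙ₊₁` and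
`fₙ = 1` off `Wₙ`. The peak function is `S = ∑ (1 - r) rⁿ (1 - fₙ)` with `r = C / (C + 1)`.
It equals `1` at `x` and `0` off `U`. At any other point, if `j` is the first index with
`fⱼ(y) ≠ 0`, the terms before `j` add up to `1 - rʲ`, those after `j` vanish, and the single
remaining term is at most `(1 - r) rʲ (1 + C) = rʲ`, so `|S(y)| ≤ 1`.
-/

open Filter Topology Finset

lemma hasSum_one_sub_mul_pow {r : ℝ} (h₀ : 0 ≤ r) (h₁ : r < 1) :
    HasSum (fun n ↦ (1 - r) * r ^ n) 1 := by
  simpa [mul_inv_cancel₀ (sub_ne_zero.2 h₁.ne')] using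
    (hasSum_geometric_of_lt_one h₀ h₁).mul_left (1 - r)

lemma sum_range_one_sub_mul_pow (r : ℝ) (n : ℕ) :
    ∑ m ∈ range n, (1 - r) * r ^ m = 1 - r ^ n := by
  rw [← mul_sum, mul_comm, geom_sum_mul_neg]

lemma norm_tsum_one_sub_mul_pow_mul_le_one {r B : ℝ} (h₀ : 0 ≤ r) (h₁ : r < 1)
    (hB : (1 - r) * B ≤ 1) {a : ℕ → ℂ} (ha : ∀ n, ‖a n‖ ≤ B)
    (hstop : ∀ m, a m ≠ 1 → ∀ n, m < n → a n = 0) :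
    ‖∑' n, (((1 - r) * r ^ n : ℝ) : ℂ) * a n‖ ≤ 1 := by
  by_cases hone : ∀ n, a n = 1
  · simp only [hone, mul_one]
    rw [← Complex.ofReal_tsum, (hasSum_one_sub_mul_pow h₀ h₁).tsum_eq]
    simp
  push Not at hone
  classical
  set j := Nat.find hone
  have hbefore : ∀ m ∈ range j, a m = 1 := fun m hm ↦
    not_not.1 (Nat.find_min hone (mem_range.1 hm))
  have hafter : ∀ n ∉ range (j + 1), (((1 - r) * r ^ n : ℝ) : ℂ) * a n = 0 := fun n hn ↦ by
    rw [hstop j (Nat.find_spec hone) n (by simpa using hn), mul_zero]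
  have hhead : ∑ m ∈ range j, (((1 - r) * r ^ m : ℝ) : ℂ) * a m = ((1 - r ^ j : ℝ) : ℂ) := by
    rw [sum_congr rfl fun m hm ↦ by rw [hbefore m hm, mul_one], ← Complex.ofReal_sum,
      sum_range_one_sub_mul_pow]
  have hrj : r ^ j ≤ 1 := pow_le_one₀ h₀ h₁.le
  rw [tsum_eq_sum hafter, sum_range_succ, hhead]
  calc ‖((1 - r ^ j : ℝ) : ℂ) + (((1 - r) * r ^ j : ℝ) : ℂ) * a j‖
      ≤ (1 - r ^ j) + (1 - r) * r ^ j * B := by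
        refine (norm_add_le _ _).trans (add_le_add ?_ ?_)
        · rw [Complex.norm_real, Real.norm_of_nonneg (by linarith)]
        · rw [norm_mul, Complex.norm_real, Real.norm_of_nonneg (by positivity)]
          exact mul_le_mul_of_nonneg_left (ha j) (by have := h₁; positivity)
    _ ≤ 1 := by nlinarith [pow_nonneg h₀ j]

lemma ContinuousMap.tsum_one_sub_mul_pow_smul_apply {X : Type*} [TopologicalSpace X]
    [CompactSpace X] {r C : ℝ} (h₀ : 0 ≤ r) (h₁ : r < 1) {f : ℕ → C(X, ℂ)}
    (hf : ∀ n, ‖f n‖ ≤ C) (y : X) :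
    (∑' n, (((1 - r) * r ^ n : ℝ) : ℂ) • (1 - f n)) y =
      ∑' n, (((1 - r) * r ^ n : ℝ) : ℂ) * (1 - f n y) := by
  have hsum : Summable fun n ↦ (((1 - r) * r ^ n : ℝ) : ℂ) • (1 - f n) := by
    refine .of_norm_bounded ((hasSum_one_sub_mul_pow h₀ h₁).summable.mul_right (1 + C)) fun n ↦ ?_
    rw [norm_smul, Complex.norm_real, Real.norm_of_nonneg (by have := h₁; positivity)]
    refine mul_le_mul_of_nonneg_left ((norm_sub_le _ _).trans ?_) (by have := h₁; positivity)
    exact add_le_add ((ContinuousMap.norm_le _ zero_le_one).2 fun _ ↦ by simp) (hf n)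
  rw [← ContinuousMap.tsum_apply hsum]
  simp

section RelativeUnits

variable {X : Type*} [TopologicalSpace X] [CompactSpace X]

def HasBoundedRelativeUnits (A : Set C(X, ℂ)) (x : X) (C : ℝ) : Prop :=
  ∀ K : Set X, IsCompact K → K ⊆ {x}ᶜ →
    ∃ f ∈ A, (∃ U ∈ 𝓝 x, ∀ y ∈ U, f y = 0) ∧ (∀ y ∈ K, f y = 1) ∧ ‖f‖ ≤ C

variable {A : Set C(X, ℂ)} {x : X} {C : ℝ}

lemma HasBoundedRelativeUnits.exists_of_mem_nhds (hA : HasBoundedRelativeUnits A x C)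
    {W : Set X} (hW : W ∈ 𝓝 x) :
    ∃ f ∈ A, ∃ W' ∈ 𝓝 x, W' ⊆ W ∧ (∀ y ∈ W', f y = 0) ∧ (∀ y ∉ W, f y = 1) ∧ ‖f‖ ≤ C := by
  have hx : x ∈ interior W := mem_interior_iff_mem_nhds.2 hW
  obtain ⟨f, hfA, ⟨V, hV, hfV⟩, hf1, hfC⟩ :=
    hA (interior W)ᶜ isOpen_interior.isClosed_compl.isCompact
      (by simpa [Set.compl_subset_compl] using hx)
  exact ⟨f, hfA, V ∩ W, inter_mem hV hW, Set.inter_subset_right, fun y hy ↦ hfV y hy.1,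
    fun y hy ↦ hf1 y fun hy' ↦ hy (interior_subset hy'), hfC⟩

lemma HasBoundedRelativeUnits.exists_seq (hA : HasBoundedRelativeUnits A x C) {U : Set X}
    (hU : U ∈ 𝓝 x) :
    ∃ f : ℕ → C(X, ℂ), (∀ n, f n ∈ A ∧ ‖f n‖ ≤ C ∧ f n x = 0) ∧ (∀ n, ∀ y ∉ U, f n y = 1) ∧
      ∀ y m, f m y ≠ 0 → ∀ n, m < n → f n y = 1 := by
  choose! F hFA next hnext hnext_sub hF0 hF1 hFC using fun W (hW : W ∈ 𝓝 x) ↦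
    hA.exists_of_mem_nhds hW
  set W : ℕ → Set X := fun n ↦ next^[n] U
  have hW_succ : ∀ n, W (n + 1) = next (W n) := fun n ↦ Function.iterate_succ_apply' _ _ _
  have hW : ∀ n, W n ∈ 𝓝 x := fun n ↦ by
    induction n with
    | zero => exact hU
    | succ n ih => exact hW_succ n ▸ hnext _ ih
  have hanti : Antitone W :=
    antitone_nat_of_succ_le fun n ↦ hW_succ n ▸ hnext_sub _ (hW n)
  have hvanish : ∀ n, ∀ y ∈ W (n + 1), F (W n) y = 0 := fun n y hy ↦
    hF0 _ (hW n) y (hW_succ n ▸ hy)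
  have hunit : ∀ n, ∀ y ∉ W n, F (W n) y = 1 := fun n ↦ hF1 _ (hW n)
  refine ⟨fun n ↦ F (W n), fun n ↦ ⟨hFA _ (hW n), hFC _ (hW n),
    hvanish n x (mem_of_mem_nhds (hW _))⟩, fun n y hy ↦ hunit n y fun h ↦ hy ?_,
    fun y m hm n hmn ↦ hunit n y fun h ↦ hm (hvanish m y (hanti hmn h))⟩
  exact hanti (Nat.zero_le n) h

end RelativeUnits

theorem stmt7_general {X : Type*} [TopologicalSpace X] [CompactSpace X]
    (A : Subalgebra ℂ C(X, ℂ)) (hclosed : IsClosed (A : Set C(X, ℂ)))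
    (x : X)
    (hbru : ∃ C : ℝ, 1 ≤ C ∧ ∀ K : Set X, IsCompact K → K ⊆ {x}ᶜ →
      ∃ f ∈ A, (∃ U ∈ nhds x, ∀ y ∈ U, f y = 0) ∧ (∀ y ∈ K, f y = 1) ∧ ‖f‖ ≤ C) :
    ∀ U ∈ nhds x, ∃ f ∈ A, f x = 1 ∧ ‖f‖ = 1 ∧ ∀ y : X, y ∉ U → ‖f y‖ < 1 := by
  obtain ⟨C, hC, hunits⟩ := hbru
  intro U hU
  obtain ⟨f, hf, hfU, hstop⟩ := HasBoundedRelativeUnits.exists_seq hunits hU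
  set r := C / (C + 1)
  have h₀ : 0 ≤ r := by positivity
  have h₁ : r < 1 := (div_lt_one (by linarith)).2 (by linarith)
  have hB : (1 - r) * (1 + C) ≤ 1 := by
    rw [one_sub_div (by linarith)]; field_simp; linarith
  have hS := ContinuousMap.tsum_one_sub_mul_pow_smul_apply h₀ h₁ fun n ↦ (hf n).2.1
  set S := ∑' n, (((1 - r) * r ^ n : ℝ) : ℂ) • (1 - f n)
  have hSx : S x = 1 := by
    simp only [hS, (hf _).2.2, sub_zero, mul_one, ← Complex.ofReal_tsum,
      (hasSum_one_sub_mul_pow h₀ h₁).tsum_eq, Complex.ofReal_one]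
  have hSle : ∀ y, ‖S y‖ ≤ 1 := fun y ↦ by
    rw [hS]
    refine norm_tsum_one_sub_mul_pow_mul_le_one h₀ h₁ hB (fun n ↦ ?_) fun m hm n hmn ↦ ?_
    · exact (norm_sub_le _ _).trans (by simpa using (f n).norm_coe_le_norm y |>.trans (hf n).2.1)
    · rw [hstop y m (by simpa using hm) n hmn, sub_self]
  refine ⟨S, tsum_mem hclosed fun n ↦ A.smul_mem (A.sub_mem A.one_mem (hf n).1) _, hSx,
    le_antisymm ((S.norm_le zero_le_one).2 hSle) ?_, fun y hy ↦ ?_⟩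
  · simpa [hSx] using S.norm_coe_le_norm x
  · simp [hS, hfU _ y hy]

/-- Feinstein. Let `A` be a uniform algebra on a compact Hausdorff space
`X` and `x ∈ X`.  If `A` has bounded relative units at `x`, then `x` is a generalized peak
point for `A`. -/
theorem stmt7 {X : Type*} [TopologicalSpace X] [CompactSpace X] [T2Space X]
    (A : Subalgebra ℂ C(X, ℂ)) (hclosed : IsClosed (A : Set C(X, ℂ)))
    (hsep : ∀ x y : X, x ≠ y → ∃ f ∈ A, f x ≠ f y)
    (x : X)
    (hbru : ∃ C : ℝ, 1 ≤ C ∧ ∀ K : Set X, IsCompact K → K ⊆ {x}ᶜ →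
      ∃ f ∈ A, (∃ U ∈ nhds x, ∀ y ∈ U, f y = 0) ∧ (∀ y ∈ K, f y = 1) ∧ ‖f‖ ≤ C) :
    ∀ U ∈ nhds x, ∃ f ∈ A, f x = 1 ∧ ‖f‖ = 1 ∧ ∀ y : X, y ∉ U → ‖f y‖ < 1 :=
  stmt7_general A hclosed x hbru
end

section
/- Let A be a normal uniform algebra on a compact metrizable space X and let F be a closed subset of X. Then there exists a countable family 𝓕 ⊆ A of functions, each vanishing identically on some neighborhood of F, such that for each x ∈ X \ F and each compact E ⊆ X \ {x} there exist a neighborhood U of x and f ∈ 𝓕 with f|U = 1 and f|E = 0. -/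
/-- Let `A` be a normal uniform algebra on a compact metrizable space `X`
and `F ⊆ X` closed.  Then there is a countable family `𝓕 ⊆ A`, each member vanishing on a
neighborhood of `F`, such that for each `x ∉ F` and each compact `E ⊆ X \ {x}` there are a
neighborhood `U` of `x` and `f ∈ 𝓕` with `f = 1` on `U` and `f = 0` on `E`. -/
theorem stmt8 {X : Type*} [TopologicalSpace X] [CompactSpace X] [T2Space X]
    [TopologicalSpace.MetrizableSpace X]
    (A : Subalgebra ℂ C(X, ℂ)) (hclosed : IsClosed (A : Set C(X, ℂ)))
    (hsep : ∀ x y : X, x ≠ y → ∃ f ∈ A, f x ≠ f y)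
    (hnormal : ∀ K₀ K₁ : Set X, IsClosed K₀ → IsClosed K₁ → Disjoint K₀ K₁ →
      ∃ f ∈ A, (∀ y ∈ K₀, f y = 0) ∧ (∀ y ∈ K₁, f y = 1))
    (F : Set X) (hF : IsClosed F) :
    ∃ 𝓕 : Set C(X, ℂ), 𝓕.Countable ∧ 𝓕 ⊆ (A : Set C(X, ℂ)) ∧
      (∀ f ∈ 𝓕, ∃ V : Set X, IsOpen V ∧ F ⊆ V ∧ ∀ y ∈ V, f y = 0) ∧
      ∀ x ∉ F, ∀ E : Set X, IsCompact E → E ⊆ {x}ᶜ →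
        ∃ U ∈ nhds x, ∃ f ∈ 𝓕, (∀ y ∈ U, f y = 1) ∧ ∀ y ∈ E, f y = 0 := by
  classical
  letI := TopologicalSpace.metrizableSpaceMetric X
  obtain ⟨b, hbc, -, hbasis⟩ := TopologicalSpace.exists_countable_basis X
  obtain ⟨e, he⟩ : ∃ e : ℕ → Set X, insert ∅ b = Set.range e :=
    (hbc.insert ∅).exists_eq_range (Set.insert_nonempty _ _)
  have heopen : ∀ n, IsOpen (e n) := by
    intro n
    have hmem : e n ∈ insert ∅ b := by rw [he]; exact Set.mem_range_self n
    rcases hmem with h | h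
    · rw [h]; exact isOpen_empty
    · exact hbasis.isOpen h
  set U : Finset ℕ → Set X := fun s => ⋃ i ∈ s, e i with hUdef
  have hUopen : ∀ s, IsOpen (U s) := fun s => isOpen_biUnion fun i _ => heopen i
  set cond : Finset ℕ × ℕ → Prop := fun p =>
    F ⊆ U p.1 ∧ Disjoint (closure (U p.1)) (closure (e p.2)) with hconddef
  have hex : ∀ p : Finset ℕ × ℕ, ∃ f : C(X, ℂ), f ∈ A ∧
      (cond p → (∀ y ∈ closure (U p.1), f y = 0) ∧ (∀ y ∈ closure (e p.2), f y = 1)) := by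
    intro p
    by_cases hp : cond p
    · obtain ⟨f, hfA, h0, h1⟩ := hnormal _ _ isClosed_closure isClosed_closure hp.2
      exact ⟨f, hfA, fun _ => ⟨h0, h1⟩⟩
    · exact ⟨1, one_mem A, fun h => absurd h hp⟩
  choose g hgA hgp using hex
  refine ⟨g '' {p | cond p}, (Set.to_countable _).image g, ?_, ?_, ?_⟩
  · rintro f ⟨p, -, rfl⟩; exact hgA p
  · rintro f ⟨p, hp, rfl⟩
    exact ⟨U p.1, hUopen p.1, hp.1, fun y hy => (hgp p hp).1 y (subset_closure hy)⟩
  · intro x hx E hE hEx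
    have hKcl : IsClosed (F ∪ E) := hF.union hE.isClosed
    have hxK : x ∉ F ∪ E := by
      rintro (h | h)
      · exact hx h
      · exact hEx h rfl
    obtain ⟨W, O, hWopen, hOopen, hKW, hxO, hWO⟩ :=
      NormalSpace.normal (F ∪ E) {x} hKcl isClosed_singleton
        (Set.disjoint_singleton_right.2 hxK)
    obtain ⟨W', hW'open, hKW', hclW'⟩ := normal_exists_closure_subset hKcl hWopen hKW
    obtain ⟨O', hO'open, hxO', hclO'⟩ :=
      normal_exists_closure_subset isClosed_singleton hOopen hxO
    have hdisjcl : Disjoint (closure W') (closure O') :=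
      hWO.mono hclW' hclO'
    -- cover F ∪ E by finitely many basis sets inside W'
    set C : ℕ → Set X := fun n => if e n ⊆ W' then e n else ∅ with hCdef
    have hCopen : ∀ n, IsOpen (C n) := by
      intro n; by_cases h : e n ⊆ W' <;> simp [hCdef, h, heopen n]
    have hcover : F ∪ E ⊆ ⋃ n, C n := by
      intro z hz
      obtain ⟨t, htb, hzt, htW⟩ := hbasis.exists_subset_of_mem_open (hKW' hz) hW'open
      obtain ⟨n, rfl⟩ : t ∈ Set.range e := by
        rw [← he]; exact Set.mem_insert_of_mem _ htb
      exact Set.mem_iUnion.2 ⟨n, by simp [hCdef, htW, hzt]⟩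
    have hKcpt : IsCompact (F ∪ E) := (hF.isCompact).union hE
    obtain ⟨s, hs⟩ := hKcpt.elim_finite_subcover C hCopen hcover
    set s' : Finset ℕ := s.filter (fun n => e n ⊆ W') with hs'def
    have hKs' : F ∪ E ⊆ U s' := by
      intro z hz
      obtain ⟨_, ⟨n, rfl⟩, hn⟩ := hs hz
      simp only [Set.mem_iUnion] at hn
      obtain ⟨hns, hnC⟩ := hn
      by_cases h : e n ⊆ W'
      · exact Set.mem_biUnion (Finset.mem_filter.2 ⟨hns, h⟩)
          (by simpa [hCdef, h] using hnC)
      · simp [hCdef, h] at hnC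
    have hUs'W : U s' ⊆ W' := by
      intro z hz
      obtain ⟨_, ⟨n, rfl⟩, hn⟩ := hz
      simp only [Set.mem_iUnion] at hn
      obtain ⟨hns', hz'⟩ := hn
      exact (Finset.mem_filter.1 hns').2 hz'
    -- basis neighborhood of x inside O'
    obtain ⟨t, htb, hxt, htO⟩ := hbasis.exists_subset_of_mem_open (hxO' rfl) hO'open
    obtain ⟨n, rfl⟩ : t ∈ Set.range e := by
      rw [← he]; exact Set.mem_insert_of_mem _ htb
    have hcond : cond (s', n) := by
      constructor
      · exact fun z hz => hKs' (Or.inl hz)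
      · exact hdisjcl.mono (closure_mono hUs'W) (closure_mono htO)
    refine ⟨e n, (heopen n).mem_nhds hxt, g (s', n), ⟨(s', n), hcond, rfl⟩, ?_, ?_⟩
    · exact fun y hy => (hgp _ hcond).2 y (subset_closure hy)
    · exact fun y hy => (hgp _ hcond).1 y (subset_closure (hKs' (Or.inr hy)))
end

section
/- Let {D_k} be a sequence of open discs in ℂ with radii r_k and let s_k denote the distance from D_k to the point 1. Suppose Σ_k r_k · exp(2ρ₂/s_k) < ∞ for a fixed ρ₂ > 0. Then for each n, the total variation of the complex measure μ_n defined on the boundary of K_n = D̄(0, 1+1/n) \ ∪_{k≤n} D_k by dμ_n = exp(−ρ₂(z+1)/(z−1)) dz satisfies ‖μ_n‖ ≤ 2π(M + 2), where M = Σ_k r_k · exp(2ρ₂/s_k). -/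
open Metric

/-! The density `exp (-ρ (z + 1) / (z - 1))` has modulus `exp (-ρ Re w)` with `w = (z + 1) / (z - 1)`.
Since `Re w = (|z|² - 1) / |z - 1|²`, it is at most `1` outside the unit disc, and since
`w = 1 + 2 / (z - 1)`, it is at most `exp (2ρ / s)` at distance `≥ s` from `1`. Bounding each
boundary integral by the length of its circle times the sup of the density gives `2π · 2` for the
outer circle of radius `1 + 1/n ≤ 2` and `2π r_k exp (2ρ / s_k)` for the `k`-th disc. -/

namespace Complex

theorem re_add_one_div_sub_one (z : ℂ) :
    ((z + 1) / (z - 1)).re = (‖z‖ ^ 2 - 1) / ‖z - 1‖ ^ 2 := by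
  simp only [div_re, ← normSq_eq_norm_sq, normSq_apply, add_re, add_im, sub_re, sub_im, one_re,
    one_im]
  ring

theorem re_add_one_div_sub_one_nonneg {z : ℂ} (hz : 1 ≤ ‖z‖) : 0 ≤ ((z + 1) / (z - 1)).re := by
  rw [re_add_one_div_sub_one]
  have : 1 ≤ ‖z‖ ^ 2 := one_le_pow₀ hz
  positivity

theorem one_sub_two_div_le_re_add_one_div_sub_one {z : ℂ} (hz : z ≠ 1) :
    1 - 2 / ‖z - 1‖ ≤ ((z + 1) / (z - 1)).re := by
  have hw : z - 1 ≠ 0 := sub_ne_zero.mpr hz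
  have hsplit : (z + 1) / (z - 1) = 1 + 2 / (z - 1) := by field_simp; ring
  have hre : -‖2 / (z - 1)‖ ≤ (2 / (z - 1)).re := neg_le_of_abs_le (abs_re_le_norm _)
  rw [norm_div, Complex.norm_two] at hre
  rw [hsplit, add_re, one_re]
  linarith

theorem norm_exp_neg_mul_add_one_div_sub_one (ρ : ℝ) (z : ℂ) :
    ‖exp (-(ρ : ℂ) * (z + 1) / (z - 1))‖ = Real.exp (-ρ * ((z + 1) / (z - 1)).re) := by
  rw [norm_exp, mul_div_assoc, ← ofReal_neg, re_ofReal_mul]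

theorem norm_exp_neg_mul_add_one_div_sub_one_le_one {ρ : ℝ} (hρ : 0 ≤ ρ) {z : ℂ}
    (hz : 1 ≤ ‖z‖) : ‖exp (-(ρ : ℂ) * (z + 1) / (z - 1))‖ ≤ 1 := by
  rw [norm_exp_neg_mul_add_one_div_sub_one, Real.exp_le_one_iff]
  have := re_add_one_div_sub_one_nonneg hz
  nlinarith

theorem norm_exp_neg_mul_add_one_div_sub_one_le {ρ s : ℝ} (hρ : 0 ≤ ρ) (hs : 0 < s) {z : ℂ}
    (hz : s ≤ ‖z - 1‖) : ‖exp (-(ρ : ℂ) * (z + 1) / (z - 1))‖ ≤ Real.exp (2 * ρ / s) := by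
  have hd : 0 < ‖z - 1‖ := hs.trans_le hz
  have hz1 : z ≠ 1 := fun h => by simp [h] at hd
  rw [norm_exp_neg_mul_add_one_div_sub_one, Real.exp_le_exp]
  calc -ρ * ((z + 1) / (z - 1)).re ≤ -ρ * (1 - 2 / ‖z - 1‖) :=
        mul_le_mul_of_nonpos_left (one_sub_two_div_le_re_add_one_div_sub_one hz1) (by linarith)
    _ = -ρ + 2 * ρ / ‖z - 1‖ := by ring
    _ ≤ 2 * ρ / ‖z - 1‖ := by linarith
    _ ≤ 2 * ρ / s := div_le_div_of_nonneg_left (by linarith) hs hz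

end Complex

theorem intervalIntegral_norm_circleMap_mul_le {E : Type*} [NormedAddCommGroup E] (f : ℂ → E)
    (c : ℂ) {R C : ℝ} (hR : 0 ≤ R) (hf : ∀ z ∈ sphere c R, ‖f z‖ ≤ C) :
    ∫ θ in (0 : ℝ)..(2 * Real.pi), ‖f (circleMap c R θ)‖ * R ≤ 2 * Real.pi * (R * C) := by
  refine (Real.le_norm_self _).trans <|
    (intervalIntegral.norm_integral_le_of_norm_le_const (C := C * R) fun θ _ => ?_).trans_eq ?_
  · rw [norm_mul, norm_norm, Real.norm_of_nonneg hR]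
    exact mul_le_mul_of_nonneg_right (hf _ (circleMap_mem_sphere c hR θ)) hR
  · rw [sub_zero, abs_of_pos Real.two_pi_pos]
    ring

theorem stmt9_general (ρ₂ : ℝ) (hρ : 0 < ρ₂) (c : ℕ → ℂ) (r s : ℕ → ℝ)
    (hr : ∀ k, 0 < r k) (hs : ∀ k, 0 < s k)
    (hsk : ∀ k, ∀ z ∈ Metric.closedBall (c k) (r k), s k ≤ ‖z - 1‖)
    (hsum : Summable (fun k => r k * Real.exp (2 * ρ₂ / s k)))
    (n : ℕ) :
    (∫ θ in (0 : ℝ)..(2 * Real.pi),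
        ‖Complex.exp (-(ρ₂ : ℂ) * (circleMap 0 (1 + 1 / n) θ + 1) /
            (circleMap 0 (1 + 1 / n) θ - 1))‖ * (1 + 1 / n))
      + ∑ k ∈ Finset.range n, ∫ θ in (0 : ℝ)..(2 * Real.pi),
          ‖Complex.exp (-(ρ₂ : ℂ) * (circleMap (c k) (r k) θ + 1) /
              (circleMap (c k) (r k) θ - 1))‖ * r k
      ≤ 2 * Real.pi * ((∑' k, r k * Real.exp (2 * ρ₂ / s k)) + 2) := by
  have hinv : 1 / (n : ℝ) ≤ 1 := (one_div (n : ℝ)).trans_le n.cast_inv_le_one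
  have houter := intervalIntegral_norm_circleMap_mul_le
    (fun z => Complex.exp (-(ρ₂ : ℂ) * (z + 1) / (z - 1))) 0 (R := 1 + 1 / n) (by positivity)
      fun z hz => Complex.norm_exp_neg_mul_add_one_div_sub_one_le_one hρ.le
        (by rw [mem_sphere_zero_iff_norm.mp hz]; exact le_add_of_nonneg_right (by positivity))
  have hdisc k := intervalIntegral_norm_circleMap_mul_le
    (fun z => Complex.exp (-(ρ₂ : ℂ) * (z + 1) / (z - 1))) (c k) (hr k).le fun z hz =>
      Complex.norm_exp_neg_mul_add_one_div_sub_one_le hρ.le (hs k)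
        (hsk k z (sphere_subset_closedBall hz))
  have hpartial : ∑ k ∈ Finset.range n, r k * Real.exp (2 * ρ₂ / s k) ≤
      ∑' k, r k * Real.exp (2 * ρ₂ / s k) :=
    hsum.sum_le_tsum _ fun k _ => by have := hr k; positivity
  calc _ ≤ 2 * Real.pi * ((1 + 1 / n) * 1) +
        ∑ k ∈ Finset.range n, 2 * Real.pi * (r k * Real.exp (2 * ρ₂ / s k)) :=
        add_le_add houter (Finset.sum_le_sum fun k _ => hdisc k)
    _ ≤ _ := by
      rw [← Finset.mul_sum]
      nlinarith [Real.pi_pos]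

/-- Let `{D_k}` be open discs (centers `c k`, radii `r k`) with
`s k ≤ |z − 1|` for `z` in the closed disc `D̄(c k, r k)`, and suppose
`M = Σ_k r_k exp(2ρ₂/s_k) < ∞`.  Then the total variation of the measure
`dμ_n = exp(−ρ₂(z+1)/(z−1)) dz` on `∂K_n`, where
`K_n = D̄(0, 1+1/n) \ ∪_{k<n} D_k`, is at most `2π(M + 2)`; the total variation is bounded
by the sum of the integrals of the modulus of the density over the circles making up the
boundary, parametrized by `circleMap`. -/
theorem stmt9 (ρ₂ : ℝ) (hρ : 0 < ρ₂) (c : ℕ → ℂ) (r s : ℕ → ℝ)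
    (hr : ∀ k, 0 < r k) (hs : ∀ k, 0 < s k)
    (hsk : ∀ k, ∀ z ∈ Metric.closedBall (c k) (r k), s k ≤ ‖z - 1‖)
    (hsum : Summable (fun k => r k * Real.exp (2 * ρ₂ / s k)))
    (n : ℕ) (hn : 1 ≤ n) :
    (∫ θ in (0 : ℝ)..(2 * Real.pi),
        ‖Complex.exp (-(ρ₂ : ℂ) * (circleMap 0 (1 + 1 / n) θ + 1) /
            (circleMap 0 (1 + 1 / n) θ - 1))‖ * (1 + 1 / n))
      + ∑ k ∈ Finset.range n, ∫ θ in (0 : ℝ)..(2 * Real.pi),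
          ‖Complex.exp (-(ρ₂ : ℂ) * (circleMap (c k) (r k) θ + 1) /
              (circleMap (c k) (r k) θ - 1))‖ * r k
      ≤ 2 * Real.pi * ((∑' k, r k * Real.exp (2 * ρ₂ / s k)) + 2) :=
  stmt9_general ρ₂ hρ c r s hr hs hsk hsum n
end

section
/- Let K ⊆ ℂ be compact with 1 ∈ K, and for ρ ≥ 0 let e_ρ : K → ℂ be the continuous function given by e_ρ(z) = (z−1)·exp(ρ(z+1)/(z−1)) for z ≠ 1 and e_ρ(1) = 0. If K ⊆ D̄ (the closed unit disc), then for 0 ≤ ρ₁ < ρ₂ the function e_{ρ₂} belongs to the closed ideal of R(K) generated by e_{ρ₁}, where R(K) is the uniform closure in C(K) of rational functions with poles off K. -/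
/-- Restrictions to `K` of rational functions with no poles on `K`. -/
def ratFns (K : Set ℂ) : Set C(K, ℂ) :=
  {g | ∃ p q : Polynomial ℂ, (∀ z : K, q.eval (z : ℂ) ≠ 0) ∧
      ∀ z : K, g z = p.eval (z : ℂ) / q.eval (z : ℂ)}

/-- `R(K)`: the uniform closure in `C(K)` of the rational functions with poles off `K`. -/
def RK (K : Set ℂ) : Set C(K, ℂ) := closure (ratFns K)

/-!
With `τ = ρ₂ - ρ₁` we have `e_{ρ₂} = exp (τ (z+1)/(z-1)) e_{ρ₁}`. Moving the pole of the
exponent from `1` to `r > 1` gives `exp (τ (z+1)/(z-r))`, which lies in `R(K)` because `R(K)` is a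
closed algebra containing the rational function in the exponent. On the closed disc all these
exponentials have modulus at most `1`, so `(r, z) ↦ exp (τ (z+1)/(z-r)) e_{ρ₁}(z)` is jointly
continuous on `[1, ∞) × K`, even at `(1, 1)` where `e_{ρ₁}` vanishes. As `K` is compact, its
slices converge uniformly to `e_{ρ₂}` as `r → 1`.
-/

open Filter Topology

theorem Continuous.bounded_mul {X R : Type*} [TopologicalSpace X] [NormedRing R]
    {f g : X → R} {C : ℝ} (hf : Continuous f) (hg : ∀ x, ‖g x‖ ≤ C)
    (hgf : ∀ x, f x ≠ 0 → ContinuousAt g x) : Continuous fun x => g x * f x := by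
  refine continuous_iff_continuousAt.2 fun x => ?_
  by_cases hfx : f x = 0
  · have hf0 : Tendsto f (𝓝 x) (𝓝 0) := hfx ▸ hf.continuousAt
    simpa [ContinuousAt, hfx] using
      isBoundedUnder_le_mul_tendsto_zero (isBoundedUnder_of ⟨C, fun y => hg y⟩) hf0
  · exact (hgf x hfx).mul hf.continuousAt

theorem mul_mem_ratFns {K : Set ℂ} {f g : C(K, ℂ)} (hf : f ∈ ratFns K) (hg : g ∈ ratFns K) :
    f * g ∈ ratFns K := by
  obtain ⟨p, q, hq, hf⟩ := hf
  obtain ⟨p', q', hq', hg⟩ := hg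
  refine ⟨p * p', q * q', fun z => by simpa using mul_ne_zero (hq z) (hq' z), fun z => ?_⟩
  simp [hf, hg, div_mul_div_comm]

theorem add_mem_ratFns {K : Set ℂ} {f g : C(K, ℂ)} (hf : f ∈ ratFns K) (hg : g ∈ ratFns K) :
    f + g ∈ ratFns K := by
  obtain ⟨p, q, hq, hf⟩ := hf
  obtain ⟨p', q', hq', hg⟩ := hg
  refine ⟨p * q' + q * p', q * q', fun z => by simpa using mul_ne_zero (hq z) (hq' z),
    fun z => ?_⟩
  simp [hf, hg, div_add_div _ _ (hq z) (hq' z)]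

def ratFnsSubalgebra (K : Set ℂ) : Subalgebra ℂ C(K, ℂ) where
  carrier := ratFns K
  mul_mem' := mul_mem_ratFns
  add_mem' := add_mem_ratFns
  algebraMap_mem' c := ⟨Polynomial.C c, 1, fun _ => by simp, fun _ => by simp⟩

theorem coe_topologicalClosure_ratFnsSubalgebra (K : Set ℂ) [CompactSpace K] :
    ((ratFnsSubalgebra K).topologicalClosure : Set C(K, ℂ)) = RK K :=
  Subalgebra.topologicalClosure_coe _

theorem exp_mem_RK {K : Set ℂ} [CompactSpace K] {g : C(K, ℂ)} (hg : g ∈ ratFns K) :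
    NormedSpace.exp g ∈ RK K := by
  rw [← coe_topologicalClosure_ratFnsSubalgebra]
  exact NormedSpace.exp_mem (R := ℂ) (Subalgebra.isClosed_topologicalClosure _)
    (Subalgebra.le_topologicalClosure (ratFnsSubalgebra K) hg)

theorem Complex.re_add_one_div_sub_nonpos {z : ℂ} {r : ℝ} (hz : ‖z‖ ≤ 1) (hr : 1 ≤ r) :
    ((z + 1) / (z - r)).re ≤ 0 := by
  have hnormSq : z.re ^ 2 + z.im ^ 2 ≤ 1 := by
    nlinarith [Complex.sq_norm z, Complex.normSq_apply z, norm_nonneg z]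
  have hre : -1 ≤ z.re := by nlinarith [sq_nonneg z.im]
  rw [Complex.div_re, ← add_div]
  refine div_nonpos_of_nonpos_of_nonneg ?_ (Complex.normSq_nonneg _)
  simp only [Complex.add_re, Complex.sub_re, Complex.add_im, Complex.sub_im, Complex.one_re,
    Complex.one_im, Complex.ofReal_re, Complex.ofReal_im]
  nlinarith [mul_nonneg (sub_nonneg.2 hr) (neg_le_iff_add_nonneg.1 hre)]

theorem Complex.norm_exp_mul_add_one_div_sub_le_one {z : ℂ} {r τ : ℝ} (hz : ‖z‖ ≤ 1)
    (hr : 1 ≤ r) (hτ : 0 ≤ τ) : ‖Complex.exp (τ * (z + 1) / (z - r))‖ ≤ 1 := by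
  rw [Complex.norm_exp, Real.exp_le_one_iff, mul_div_assoc, Complex.re_ofReal_mul]
  exact mul_nonpos_of_nonneg_of_nonpos hτ (Complex.re_add_one_div_sub_nonpos hz hr)

theorem Complex.ne_ofReal_of_norm_le_one {z : ℂ} {r : ℝ} (hz : ‖z‖ ≤ 1) (hr : 1 ≤ r)
    (h : z ≠ 1 ∨ r ≠ 1) : z ≠ r := by
  rintro rfl
  have hr1 : r = 1 := le_antisymm (by simpa [abs_of_nonneg (zero_le_one.trans hr)] using hz) hr
  simp [hr1] at h

section ClosedUnitDisc

variable {K : Set ℂ} (hKD : K ⊆ Metric.closedBall 0 1)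
include hKD

theorem norm_le_one_of_subset_closedBall (z : K) : ‖(z : ℂ)‖ ≤ 1 :=
  mem_closedBall_zero_iff.1 (hKD z.2)

theorem exists_exp_mem_RK [CompactSpace K] (τ : ℂ) {r : ℝ} (hr : 1 < r) :
    ∃ F ∈ RK K, ∀ z : K, F z = Complex.exp (τ * (z + 1) / (z - r)) := by
  have hpole (z : K) : (z : ℂ) - r ≠ 0 := sub_ne_zero.2 <|
    Complex.ne_ofReal_of_norm_le_one (norm_le_one_of_subset_closedBall hKD z) hr.le
      (.inr hr.ne')
  let g : C(K, ℂ) := ⟨fun z => τ * (z + 1) / (z - r), by fun_prop (disch := exact hpole)⟩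
  have hg : g ∈ ratFns K :=
    ⟨Polynomial.C τ * (Polynomial.X + 1), Polynomial.X - Polynomial.C (r : ℂ),
      fun z => by simpa using hpole z, fun z => by simp [g]⟩
  refine ⟨NormedSpace.exp g, exp_mem_RK hg, fun z => ?_⟩
  simp [NormedSpace.exp_continuousMap_eq, Complex.exp_eq_exp_ℂ, g]

theorem continuous_exp_mul_of_eq_zero {τ : ℝ} (hτ : 0 ≤ τ) {e : C(K, ℂ)}
    (he : ∀ z : K, (z : ℂ) = 1 → e z = 0) :
    Continuous fun p : Set.Ici (1 : ℝ) × K =>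
      Complex.exp (τ * ((p.2 : ℂ) + 1) / ((p.2 : ℂ) - (p.1 : ℝ))) * e p.2 := by
  refine (e.continuous.comp continuous_snd).bounded_mul (C := 1) (fun p =>
    Complex.norm_exp_mul_add_one_div_sub_le_one (norm_le_one_of_subset_closedBall hKD p.2)
      p.1.2 hτ) fun p hp => ?_
  have hpole : (p.2 : ℂ) - (p.1 : ℝ) ≠ 0 := sub_ne_zero.2 <|
    Complex.ne_ofReal_of_norm_le_one (norm_le_one_of_subset_closedBall hKD p.2) p.1.2
      (.inl (mt (he p.2) hp))
  fun_prop (disch := exact hpole)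

end ClosedUnitDisc

theorem stmt10_general (K : Set ℂ) (hK : IsCompact K)
    (hKD : K ⊆ Metric.closedBall 0 1)
    (ρ₁ ρ₂ : ℝ) (h12 : ρ₁ < ρ₂)
    (e₁ e₂ : C(K, ℂ))
    (he₁ : ∀ z : K, ((z : ℂ) ≠ 1 →
        e₁ z = ((z : ℂ) - 1) * Complex.exp ((ρ₁ : ℂ) * ((z : ℂ) + 1) / ((z : ℂ) - 1)))
      ∧ ((z : ℂ) = 1 → e₁ z = 0))
    (he₂ : ∀ z : K, ((z : ℂ) ≠ 1 →
        e₂ z = ((z : ℂ) - 1) * Complex.exp ((ρ₂ : ℂ) * ((z : ℂ) + 1) / ((z : ℂ) - 1)))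
      ∧ ((z : ℂ) = 1 → e₂ z = 0)) :
    e₂ ∈ closure ((fun f : C(K, ℂ) => f * e₁) '' RK K) := by
  have : CompactSpace K := isCompact_iff_compactSpace.mp hK
  obtain ⟨τ, hτ, rfl⟩ : ∃ τ, 0 ≤ τ ∧ ρ₂ = ρ₁ + τ := ⟨ρ₂ - ρ₁, by linarith, by ring⟩
  -- also at `z = 1`, where both sides vanish whatever the junk value of the exponent
  have he₂_eq (z : K) : e₂ z = Complex.exp (τ * ((z : ℂ) + 1) / ((z : ℂ) - 1)) * e₁ z := by
    by_cases hz : (z : ℂ) = 1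
    · simp [(he₁ z).2 hz, (he₂ z).2 hz]
    · rw [(he₁ z).1 hz, (he₂ z).1 hz, mul_left_comm, ← Complex.exp_add]
      congr 2
      push_cast
      ring
  let Φ : C(Set.Ici (1 : ℝ) × K, ℂ) :=
    ⟨_, continuous_exp_mul_of_eq_zero hKD hτ fun z => (he₁ z).2⟩
  have hΦ_one : Φ.curry ⟨1, Set.self_mem_Ici⟩ = e₂ := by
    ext z
    simp [Φ, he₂_eq]
  have hΦ_image : Φ.curry '' {r | 1 < (r : ℝ)} ⊆ (fun f : C(K, ℂ) => f * e₁) '' RK K := by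
    rintro _ ⟨r, hr, rfl⟩
    obtain ⟨F, hF, hFz⟩ := exists_exp_mem_RK hKD (τ : ℂ) hr
    exact ⟨F, hF, by ext z; simp [Φ, hFz]⟩
  have hone : (⟨1, Set.self_mem_Ici⟩ : Set.Ici (1 : ℝ)) ∈
      closure {r : Set.Ici (1 : ℝ) | 1 < (r : ℝ)} := by
    rw [closure_subtype]
    have hval : Subtype.val '' {r : Set.Ici (1 : ℝ) | 1 < (r : ℝ)} = Set.Ioi 1 := by
      ext x
      simpa using fun h : 1 < x => h.le
    simp [hval, closure_Ioi]
  exact hΦ_one ▸ closure_mono hΦ_image (mem_closure_image Φ.curry.continuous.continuousAt hone)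

/-- For `K ⊆ D̄` compact with `1 ∈ K`, and `0 ≤ ρ₁ < ρ₂`, the function
`e_{ρ₂}` lies in the closed ideal of `R(K)` generated by `e_{ρ₁}`, where
`e_ρ(z) = (z−1) exp(ρ(z+1)/(z−1))` for `z ≠ 1` and `e_ρ(1) = 0`. -/
theorem stmt10 (K : Set ℂ) (hK : IsCompact K) (h1 : (1 : ℂ) ∈ K)
    (hKD : K ⊆ Metric.closedBall 0 1)
    (ρ₁ ρ₂ : ℝ) (h0 : 0 ≤ ρ₁) (h12 : ρ₁ < ρ₂)
    (e₁ e₂ : C(K, ℂ))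
    (he₁ : ∀ z : K, ((z : ℂ) ≠ 1 →
        e₁ z = ((z : ℂ) - 1) * Complex.exp ((ρ₁ : ℂ) * ((z : ℂ) + 1) / ((z : ℂ) - 1)))
      ∧ ((z : ℂ) = 1 → e₁ z = 0))
    (he₂ : ∀ z : K, ((z : ℂ) ≠ 1 →
        e₂ z = ((z : ℂ) - 1) * Complex.exp ((ρ₂ : ℂ) * ((z : ℂ) + 1) / ((z : ℂ) - 1)))
      ∧ ((z : ℂ) = 1 → e₂ z = 0)) :
    e₂ ∈ closure ((fun f : C(K, ℂ) => f * e₁) '' RK K) :=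
  stmt10_general K hK hKD ρ₁ ρ₂ h12 e₁ e₂ he₁ he₂
end
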